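/- Let G = (V,E) be a finite undirected simple graph and let f : V → {0,1,2}. Write G' = G[V₀(f) ∪ V₂(f)]. Then f is a PO-minimal Roman dominating function on G if and only if the following two conditions hold: (1) N_G[V₂(f)] ∩ V₁(f) = ∅; (2) V₂(f) is a minimal dominating set of G'. -/
import Mathlib


variable {V : Type*}

/-- Closed neighborhood N_G[v] of a vertex. -/
def closedNbhd (G : SimpleGraph V) (v : V) : Set V :=
  {w | w = v ∨ G.Adj v w}

/-- Closed neighborhood N_G[U] of a set of vertices. -/
def closedNbhdSet (G : SimpleGraph V) (U : Set V) : Set V :=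
  ⋃ u ∈ U, closedNbhd G u

/-- Private neighborhood of v w.r.t. D in G: N_G[v] \ N_G[D \ {v}]. -/
def privateNbhd (G : SimpleGraph V) (D : Set V) (v : V) : Set V :=
  closedNbhd G v \ closedNbhdSet G (D \ {v})

/-- Closed neighborhood of v in the subgraph of G induced by U. -/
def indClosedNbhd (G : SimpleGraph V) (U : Set V) (v : V) : Set V :=
  {w | v ∈ U ∧ w ∈ U ∧ (w = v ∨ G.Adj v w)}

/-- Private neighborhood of v w.r.t. D inside the subgraph of G induced by U. -/
def indPrivateNbhd (G : SimpleGraph V) (U D : Set V) (v : V) : Set V :=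
  indClosedNbhd G U v \ ⋃ u ∈ D \ {v}, indClosedNbhd G U u

/-- Roman dominating function. -/
def IsRDF (G : SimpleGraph V) (f : V → Fin 3) : Prop :=
  ∀ v, f v = 0 → ∃ u, G.Adj v u ∧ f u = 2

/-- Minimal Roman dominating function (w.r.t. the pointwise order from 0 < 1 < 2). -/
def IsMinimalRDF (G : SimpleGraph V) (f : V → Fin 3) : Prop :=
  IsRDF G f ∧ ∀ g : V → Fin 3, IsRDF G g → (∀ v, g v ≤ f v) → g = f

/-- D is a dominating set of the subgraph of G induced by U. -/
def IsDomSetOn (G : SimpleGraph V) (U D : Set V) : Prop :=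
  D ⊆ U ∧ ∀ w ∈ U, ∃ u ∈ D, w = u ∨ G.Adj u w

/-- D is a minimal dominating set of the subgraph of G induced by U. -/
def IsMinDomSetOn (G : SimpleGraph V) (U D : Set V) : Prop :=
  IsDomSetOn G U D ∧ ∀ D' : Set V, D' ⊂ D → ¬ IsDomSetOn G U D'

/-- f ≤_PO g : pointwise lifting of the partial order 0 < 1, 0 < 2 on values. -/
def POle (f g : V → Fin 3) : Prop :=
  (∀ v, f v = 1 → g v = 1) ∧ (∀ v, f v = 2 → g v = 2)

/-- PO-minimal Roman dominating function. -/
def IsPOMinimalRDF (G : SimpleGraph V) (f : V → Fin 3) : Prop :=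
  IsRDF G f ∧ ∀ g : V → Fin 3, IsRDF G g → POle g f → g = f

lemma fin3_cases (a : Fin 3) : a = 0 ∨ a = 1 ∨ a = 2 := by
  fin_cases a <;> simp

lemma mem_closedNbhdSet {G : SimpleGraph V} {S : Set V} {v : V} :
    v ∈ closedNbhdSet G S ↔ ∃ u ∈ S, v = u ∨ G.Adj u v := by
  simp [closedNbhdSet, closedNbhd, Set.mem_iUnion]

theorem stmt_14 [Fintype V] (G : SimpleGraph V) (f : V → Fin 3) :
    IsPOMinimalRDF G f ↔
      (closedNbhdSet G {v | f v = 2} ∩ {v | f v = 1} = ∅ ∧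
       IsMinDomSetOn G ({v | f v = 0} ∪ {v | f v = 2}) {v | f v = 2}) := by
  classical
  constructor
  · rintro ⟨hrdf, hmin⟩
    refine ⟨?_, ⟨⟨fun x hx => Or.inr hx, ?_⟩, ?_⟩⟩
    · -- N[V2] ∩ V1 = ∅
      rw [Set.eq_empty_iff_forall_notMem]
      rintro v ⟨hvN, hv1⟩
      rw [mem_closedNbhdSet] at hvN
      obtain ⟨u, hu2, hvu⟩ := hvN
      have hv1 : f v = 1 := hv1
      have hu2 : f u = 2 := hu2
      have hne : v ≠ u := fun h => by rw [h, hu2] at hv1; exact absurd hv1 (by decide)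
      have hadj : G.Adj u v := hvu.resolve_left hne
      set g : V → Fin 3 := Function.update f v 0 with hg
      have hgrdf : IsRDF G g := by
        intro w hw
        by_cases hwv : w = v
        · subst hwv
          refine ⟨u, hadj.symm, ?_⟩
          rw [hg, Function.update_of_ne (Ne.symm hne)]
          exact hu2
        · rw [hg, Function.update_of_ne hwv] at hw
          obtain ⟨u', hadj', hu'⟩ := hrdf w hw
          have hu'v : u' ≠ v := fun h => by rw [h, hv1] at hu'; exact absurd hu' (by decide)
          exact ⟨u', hadj', by rw [hg, Function.update_of_ne hu'v]; exact hu'⟩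
      have hpo : POle g f := by
        constructor <;> intro w hw <;>
          · by_cases hwv : w = v
            · subst hwv; rw [hg, Function.update_self] at hw; exact absurd hw (by decide)
            · rw [hg, Function.update_of_ne hwv] at hw; exact hw
      have := hmin g hgrdf hpo
      have : g v = f v := by rw [this]
      rw [hg, Function.update_self, hv1] at this
      exact absurd this (by decide)
    · -- V2 dominates U
      rintro w (hw0 | hw2)
      · obtain ⟨u, hadj, hu2⟩ := hrdf w hw0
        exact ⟨u, hu2, Or.inr hadj.symm⟩
      · exact ⟨w, hw2, Or.inl rfl⟩
    · -- minimality
      rintro D' hD' ⟨hsub, hdom⟩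
      obtain ⟨hDsub, hns⟩ := hD'
      obtain ⟨x, hx2, hxD⟩ := Set.not_subset.mp hns
      have hx2 : f x = 2 := hx2
      set g : V → Fin 3 := fun w => if f w = 2 ∧ w ∉ D' then 0 else f w with hg
      have hgD : ∀ u ∈ D', g u = f u := by
        intro u hu
        simp only [hg]
        rw [if_neg]; rintro ⟨_, h⟩; exact h hu
      have hgrdf : IsRDF G g := by
        intro w hw
        have hwU : w ∈ ({v | f v = 0} ∪ {v | f v = 2} : Set V) := by
          by_cases h : f w = 2 ∧ w ∉ D'
          · exact Or.inr h.1
          · simp only [hg, if_neg h] at hw; exact Or.inl hw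
        obtain ⟨u, huD, hwu⟩ := hdom w hwU
        have hu2 : f u = 2 := hDsub huD
        have hne : w ≠ u := by
          rintro rfl
          by_cases h : f w = 2 ∧ w ∉ D'
          · exact h.2 huD
          · simp only [hg, if_neg h] at hw; rw [hw] at hu2; exact absurd hu2 (by decide)
        refine ⟨u, (hwu.resolve_left hne).symm, ?_⟩
        rw [hgD u huD]; exact hu2
      have hpo : POle g f := by
        constructor <;> intro w hw <;>
          · by_cases h : f w = 2 ∧ w ∉ D'
            · simp only [hg, if_pos h] at hw; exact absurd hw (by decide)
            · simp only [hg, if_neg h] at hw; exact hw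
      have heq := hmin g hgrdf hpo
      have hx0 : g x = 0 := by simp only [hg]; exact if_pos ⟨hx2, hxD⟩
      rw [heq, hx2] at hx0
      exact absurd hx0 (by decide)
  · rintro ⟨hN, ⟨⟨hsub, hdom⟩, hminD⟩⟩
    have hrdf : IsRDF G f := by
      intro v hv
      obtain ⟨u, hu2, hvu⟩ := hdom v (Or.inl hv)
      have hu2 : f u = 2 := hu2
      have hne : v ≠ u := fun h => by rw [h, hu2] at hv; exact absurd hv (by decide)
      exact ⟨u, (hvu.resolve_left hne).symm, hu2⟩
    refine ⟨hrdf, ?_⟩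
    intro g hg ⟨hpo1, hpo2⟩
    have key : ∀ v, f v = 2 → g v = 2 := by
      intro v hv2
      by_contra hgv
      have hgv0 : g v = 0 := by
        rcases fin3_cases (g v) with h | h | h
        · exact h
        · rw [hpo1 v h] at hv2; exact absurd hv2 (by decide)
        · exact absurd h hgv
      -- D' = V2(g) is a proper subset of V2(f) and dominates U
      have hss : {w | g w = 2} ⊂ {w | f w = 2} := by
        constructor
        · intro w hw; exact hpo2 w hw
        · intro h
          have := h hv2
          rw [Set.mem_setOf_eq] at this
          exact hgv this
      apply hminD _ hss
      constructor
      · intro w hw; exact Or.inr (hpo2 w hw)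
      · rintro w (hw0 | hw2)
        · have hw0 : f w = 0 := hw0
          have hgw0 : g w = 0 := by
            rcases fin3_cases (g w) with h | h | h
            · exact h
            · rw [hpo1 w h] at hw0; exact absurd hw0 (by decide)
            · rw [hpo2 w h] at hw0; exact absurd hw0 (by decide)
          obtain ⟨u, hadj, hu2⟩ := hg w hgw0
          exact ⟨u, hu2, Or.inr hadj.symm⟩
        · have hw2 : f w = 2 := hw2
          rcases fin3_cases (g w) with h | h | h
          · obtain ⟨u, hadj, hu2⟩ := hg w h
            exact ⟨u, hu2, Or.inr hadj.symm⟩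
          · rw [hpo1 w h] at hw2; exact absurd hw2 (by decide)
          · exact ⟨w, h, Or.inl rfl⟩
    funext v
    rcases fin3_cases (f v) with h | h | h
    · rw [h]
      rcases fin3_cases (g v) with h' | h' | h'
      · exact h'
      · rw [hpo1 v h'] at h; exact absurd h (by decide)
      · rw [hpo2 v h'] at h; exact absurd h (by decide)
    · rw [h]
      rcases fin3_cases (g v) with h' | h' | h'
      · -- g v = 0, g RDF gives 2-neighbor of v, contradicting hN
        obtain ⟨u, hadj, hu2⟩ := hg v h'
        have hu2f : f u = 2 := hpo2 u hu2
        have : v ∈ closedNbhdSet G {w | f w = 2} ∩ {w | f w = 1} := by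
          refine ⟨mem_closedNbhdSet.mpr ⟨u, hu2f, Or.inr hadj.symm⟩, h⟩
        rw [hN] at this
        exact absurd this (Set.notMem_empty v)
      · exact h'
      · rw [hpo2 v h'] at h; exact absurd h (by decide)
    · rw [h]; exact key v h
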